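/- arXiv:0710.0173 — 4 statements merged into one kernel-verified Lean document; each statement's English description precedes it below -/
import Mathlib

section
/- Let J ⊆ I_n with the parabolic subgroup W_J finite. If some adjacency-free position λ is J^c-dominant, then every element of W^J is fully commutative. -/
/-- An E-generalized Cartan matrix (E-GCM) on a finite index type `ι`. -/
structure EGCM (ι : Type*) [Fintype ι] where
  /-- the matrix of amplitudes -/
  M : ι → ι → ℝ
  diag : ∀ i, M i i = 2
  offDiag_nonpos : ∀ i j, i ≠ j → M i j ≤ 0
  zero_iff : ∀ i j, M i j = 0 ↔ M j i = 0
  prod_cond : ∀ i j, i ≠ j → M i j * M j i ≠ 0 →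
    4 ≤ M i j * M j i ∨
      ∃ k : ℕ, 3 ≤ k ∧ M i j * M j i = 4 * Real.cos (Real.pi / k) ^ 2

namespace EGCM

variable {ι : Type*} [Fintype ι]

/-- Adjacency in the E-GCM graph. -/
def Adj (E : EGCM ι) (i j : ι) : Prop := i ≠ j ∧ E.M i j ≠ 0

/-- The underlying simple graph of an E-GCM graph. -/
def graph (E : EGCM ι) : SimpleGraph ι where
  Adj i j := i ≠ j ∧ E.M i j ≠ 0
  symm := by
    constructor
    intro i j ⟨h1, h2⟩
    exact ⟨h1.symm, fun hz => h2 ((E.zero_iff j i).mp hz)⟩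
  loopless := by constructor; intro i ⟨h, _⟩; exact h rfl

/-- The result of firing node `i` from position `lam`. -/
def fire (E : EGCM ι) (lam : ι → ℝ) (i : ι) : ι → ℝ := fun j => lam j - E.M i j * lam i

/-- The position resulting from firing the nodes in the list `s` in order. -/
def fireList (E : EGCM ι) (lam : ι → ℝ) : List ι → (ι → ℝ)
  | [] => lam
  | i :: s => fireList E (E.fire lam i) s

/-- The firing sequence `s` is legal from position `lam`: at each step the
fired node carries a positive number. -/
def Legal (E : EGCM ι) (lam : ι → ℝ) : List ι → Prop
  | [] => True
  | i :: s => 0 < lam i ∧ Legal E (E.fire lam i) s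

/-- A position with no positive entries. -/
def Terminal (lam : ι → ℝ) : Prop := ∀ i, lam i ≤ 0

/-- `s` is a (convergent) game sequence from `lam`: a legal firing sequence whose
resulting position has no positive entries. -/
def IsGameSeq (E : EGCM ι) (lam : ι → ℝ) (s : List ι) : Prop :=
  E.Legal lam s ∧ Terminal (E.fireList lam s)

/-- The position after `k` steps of the infinite firing sequence `f`. -/
def posAt (E : EGCM ι) (lam : ι → ℝ) (f : ℕ → ι) : ℕ → (ι → ℝ)
  | 0 => lam
  | k + 1 => E.fire (posAt E lam f k) (f k)

/-- `f` is a divergent game sequence from `lam`: an infinite sequence of legal firings. -/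
def DivergentSeq (E : EGCM ι) (lam : ι → ℝ) (f : ℕ → ι) : Prop :=
  ∀ k, 0 < E.posAt lam f k (f k)

/-- A dominant position: all numbers nonnegative. -/
def Dominant (lam : ι → ℝ) : Prop := ∀ i, 0 ≤ lam i

/-- A strongly dominant position: all numbers positive. -/
def StronglyDominant (lam : ι → ℝ) : Prop := ∀ i, 0 < lam i

/-- The E-GCM graph is admissible if some nonzero dominant position has a
convergent game sequence. -/
def Admissible (E : EGCM ι) : Prop :=
  ∃ lam : ι → ℝ, Dominant lam ∧ lam ≠ 0 ∧ ∃ s : List ι, E.IsGameSeq lam s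

/-- The E-GCM graph is strongly admissible if every nonzero dominant position has a
convergent game sequence. -/
def StronglyAdmissible (E : EGCM ι) : Prop :=
  ∀ lam : ι → ℝ, Dominant lam → lam ≠ 0 → ∃ s : List ι, E.IsGameSeq lam s

/-- A position is adjacency-free if no position reachable from it by a legal firing
sequence (i.e. no intermediate position of a game sequence) has positive numbers at
two adjacent nodes. -/
def AdjacencyFree (E : EGCM ι) (lam : ι → ℝ) : Prop :=
  ∀ s : List ι, E.Legal lam s →
    ¬ ∃ i j, E.Adj i j ∧ 0 < E.fireList lam s i ∧ 0 < E.fireList lam s j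

/-- A `J`-complement-dominant position: zero exactly at the nodes of `J`, positive elsewhere. -/
def JcDominant (J : Set ι) (lam : ι → ℝ) : Prop :=
  (∀ j ∈ J, lam j = 0) ∧ ∀ i ∉ J, 0 < lam i

open Classical in
/-- The Coxeter exponent `m i j` attached to the E-GCM: `m i j = k` if
`M i j * M j i = 4 cos²(π/k)` with `k ≥ 2`, and `m i j = 0` (representing `∞`)
if `M i j * M j i ≥ 4`. -/
noncomputable def m (E : EGCM ι) (i j : ι) : ℕ :=
  if i = j then 1
  else if h : ∃ k : ℕ, 2 ≤ k ∧ E.M i j * E.M j i = 4 * Real.cos (Real.pi / k) ^ 2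
    then Nat.find h else 0

theorem m_symm (E : EGCM ι) (i j : ι) : E.m i j = E.m j i := by
  unfold m
  rcases eq_or_ne i j with rfl | hij
  · simp
  · rw [if_neg hij, if_neg (Ne.symm hij)]
    by_cases h : ∃ k : ℕ, 2 ≤ k ∧ E.M i j * E.M j i = 4 * Real.cos (Real.pi / k) ^ 2
    · have h' : ∃ k : ℕ, 2 ≤ k ∧ E.M j i * E.M i j = 4 * Real.cos (Real.pi / k) ^ 2 := by
        rw [mul_comm]; exact h
      rw [dif_pos h, dif_pos h']
      exact le_antisymm (Nat.find_mono fun n hn => by rwa [mul_comm (E.M i j)])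
        (Nat.find_mono fun n hn => by rwa [mul_comm (E.M j i)])
    · have h' : ¬ ∃ k : ℕ, 2 ≤ k ∧ E.M j i * E.M i j = 4 * Real.cos (Real.pi / k) ^ 2 := by
        rw [mul_comm]; exact h
      rw [dif_neg h, dif_neg h']

theorem m_offDiag (E : EGCM ι) (i j : ι) (h : i ≠ j) : E.m i j ≠ 1 := by
  classical
  unfold m
  rw [if_neg h]
  split
  · rename_i hex
    have := Nat.find_spec hex
    omega
  · omega

/-- The Coxeter matrix associated to the E-GCM. -/
noncomputable def cox (E : EGCM ι) : CoxeterMatrix ι where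
  M := fun i j => E.m i j
  isSymm := by
    ext i j
    exact E.m_symm j i
  diagonal := by intro i; simp [m]
  off_diagonal := fun i j h => E.m_offDiag i j h

/-- The reflection `S i` of the geometric representation:
`S i v = v − 2 B(α i, v) • α i` where `B (α i, α j) = M i j / 2`. -/
noncomputable def S [DecidableEq ι] (E : EGCM ι) (i : ι) : Module.End ℝ (ι → ℝ) :=
  LinearMap.id -
    LinearMap.smulRight
      ((∑ k, E.M i k • LinearMap.proj k : (ι → ℝ) →ₗ[ℝ] ℝ)) (Pi.single i 1)

end EGCM

section Roots

variable {ι : Type*} [Fintype ι] [DecidableEq ι]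
variable {W : Type*} [Group W]

/-- `α` is a root for the geometric representation `σ`. -/
def IsRoot (σ : W →* Module.End ℝ (ι → ℝ)) (α : ι → ℝ) : Prop :=
  ∃ (w : W) (i : ι), σ w (Pi.single i 1) = α

/-- `α` is a positive root. -/
def IsPosRoot (σ : W →* Module.End ℝ (ι → ℝ)) (α : ι → ℝ) : Prop :=
  IsRoot σ α ∧ ∀ i, 0 ≤ α i

/-- `α` is a negative root. -/
def IsNegRoot (σ : W →* Module.End ℝ (ι → ℝ)) (α : ι → ℝ) : Prop :=
  IsRoot σ α ∧ ∀ i, α i ≤ 0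

/-- `N_M(w)`: the set of positive roots sent to negative roots by `w`. -/
def NM (σ : W →* Module.End ℝ (ι → ℝ)) (w : W) : Set (ι → ℝ) :=
  {α | IsPosRoot σ α ∧ IsNegRoot σ (σ w α)}

/-- `𝔖_M(α)`: the positive roots which are real multiples of `α`. -/
def Sfrak (σ : W →* Module.End ℝ (ι → ℝ)) (α : ι → ℝ) : Set (ι → ℝ) :=
  {β | (∃ K : ℝ, β = K • α) ∧ IsPosRoot σ β}

end Roots

section Parabolic

variable {ι : Type*} {W : Type*} [Group W]

/-- The standard parabolic subgroup `W_J`. -/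
def parabolic {M : CoxeterMatrix ι} (cs : CoxeterSystem M W) (J : Set ι) : Subgroup W :=
  Subgroup.closure (cs.simple '' J)

/-- The set `W^J` of minimal coset representatives. -/
def minReps {M : CoxeterMatrix ι} (cs : CoxeterSystem M W) (J : Set ι) : Set W :=
  {w | ∀ j ∈ J, cs.length w < cs.length (w * cs.simple j)}

end Parabolic

namespace EGCM

variable {ι : Type*} [Fintype ι]

/-- The E-GCM subgraph induced on a subset `I` of the nodes. -/
def restrict (E : EGCM ι) (I : Finset ι) : EGCM {x // x ∈ I} where
  M i j := E.M i j
  diag i := E.diag i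
  offDiag_nonpos i j h := E.offDiag_nonpos i j (fun hc => h (Subtype.ext hc))
  zero_iff i j := E.zero_iff i j
  prod_cond i j h := E.prod_cond i j (fun hc => h (Subtype.ext hc))

/-- Adjacent nodes `i`, `j` are odd-neighborly if `m i j` is odd. -/
def OddNeighborly (E : EGCM ι) (i j : ι) : Prop := E.Adj i j ∧ Odd (E.m i j)

/-- The factor `K_{j i} = −(M j i) / (2 cos (π / m i j))` attached to an
odd-neighborly pair `(i, j)`. -/
noncomputable def Kfac (E : EGCM ι) (i j : ι) : ℝ :=
  -E.M j i / (2 * Real.cos (Real.pi / (E.m i j : ℝ)))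

/-- `Π_P` for the ON-path `P` given by a list of nodes: the product of the factors
`K` along consecutive pairs. -/
noncomputable def piON (E : EGCM ι) : List ι → ℝ
  | [] => 1
  | [_] => 1
  | a :: b :: t => piON E (b :: t) * E.Kfac a b

/-- `y` can be reached from `x` by a path of odd neighbors. -/
def ONReach (E : EGCM ι) (x y : ι) : Prop :=
  ∃ l : List ι, l.Chain' E.OddNeighborly ∧ l.head? = some x ∧ l.getLast? = some y

/-- The ON-connected component containing `x` is unital ON-cyclic: every ON-cycle
whose nodes lie in this component has `Π = 1`. -/
def UnitalONCyclicAt (E : EGCM ι) (x : ι) : Prop :=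
  ∀ l : List ι, l ≠ [] → l.Chain' E.OddNeighborly → (∀ y ∈ l, E.ONReach x y) →
    l.head? = l.getLast? → E.piON l = 1

/-- The E-GCM graph has an odd asymmetry: an odd-neighborly pair `i`, `j` with
`M i j ≠ M j i`. -/
def HasOddAsymmetry (E : EGCM ι) : Prop :=
  ∃ i j, E.OddNeighborly i j ∧ E.M i j ≠ E.M j i

end EGCM

section FullComm

variable {ι : Type*} [Fintype ι] {W : Type*} [Group W]

/-- An elementary simplification of commuting type: interchange adjacent letters
`x`, `y` with `m x y = 2`. -/
def CommMove (E : EGCM ι) (l l' : List ι) : Prop :=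
  ∃ (u v : List ι) (x y : ι), E.m x y = 2 ∧ l = u ++ x :: y :: v ∧ l' = u ++ y :: x :: v

/-- `w` is fully commutative: any reduced word for `w` can be obtained from any other
by a sequence of elementary simplifications of commuting type. -/
def FullyCommutative (E : EGCM ι) {W : Type*} [Group W] (cs : CoxeterSystem E.cox W)
    (w : W) : Prop :=
  ∀ l l' : List ι,
    cs.IsReduced l.reverse → cs.wordProd l.reverse = w →
    cs.IsReduced l'.reverse → cs.wordProd l'.reverse = w →
    Relation.ReflTransGen (CommMove E) l l'

end FullComm

/-- The Coxeter graph of a Coxeter matrix: an edge between `i ≠ j` iff `m i j ≠ 2`. -/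
def coxGraph {ι : Type*} (cm : CoxeterMatrix ι) : SimpleGraph ι where
  Adj i j := i ≠ j ∧ cm i j ≠ 2
  symm := by
    constructor
    intro i j ⟨h1, h2⟩
    exact ⟨h1.symm, by rwa [cm.symmetric j i]⟩
  loopless := by constructor; intro i ⟨h, _⟩; exact h rfl

/-- The E-GCM `E` has associated exponents given by the Coxeter matrix `cm`:
`M i j * M j i = 4 cos² (π / cm i j)` when `cm i j ≠ 0` and `M i j * M j i ≥ 4`
when `cm i j = 0` (representing `∞`), with `M i j = 0` iff `cm i j = 2`. -/
def Compat {ι : Type*} [Fintype ι] (E : EGCM ι) (cm : CoxeterMatrix ι) : Prop :=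
  ∀ i j : ι, i ≠ j →
    (E.M i j = 0 ↔ cm i j = 2) ∧
    ((cm i j = 0 ∧ 4 ≤ E.M i j * E.M j i) ∨
      (cm i j ≠ 0 ∧ E.M i j * E.M j i = 4 * Real.cos (Real.pi / (cm i j : ℝ)) ^ 2))

/-!
The reflections `Sᵢ v = v - (∑ₖ M i k v k) • eᵢ` satisfy the Coxeter relations (on the plane of
`eᵢ, eⱼ` the powers of `Sᵢ Sⱼ` are given by Chebyshev polynomials at `cos (π / m i j)`), hence give
a representation of `W`, and Deodhar's dihedral argument shows that `w eᵢ ≥ 0` exactly when `i` is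
not a right descent of `w`. Firing a word with product `u` from `λ` leads to the position
`k ↦ ⟪λ, u⁻¹ eₖ⟫`.

Let `w ∈ W^J` and let `v` be a prefix of `w` with right descent `k`. After firing the suffix
`u = v⁻¹ w`, node `k` carries `⟪λ, u⁻¹ eₖ⟫ > 0`: the root `u⁻¹ eₖ` is positive, and if its pairing
with the `Jᶜ`-dominant `λ` vanished it would be supported on `J`, where `w` has no descents, so
`w u⁻¹ eₖ = v eₖ` would be both `≥ 0` and `≤ 0`. Hence reduced words of suffixes of `w` are legal
firing sequences, and adjacency-freeness makes any two distinct right descents of a prefix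
non-adjacent, i.e. commuting. Induction on the length then links any two reduced words of a prefix
by commutations.
-/

namespace Polynomial.Chebyshev

open Real

theorem U_real_eval_add_one (c : ℝ) (k : ℤ) :
    (U ℝ (k + 1)).eval c = 2 * c * (U ℝ k).eval c - (U ℝ (k - 1)).eval c := by
  simp [U_add_one]

theorem U_real_eval_nonneg_of_one_le {c : ℝ} (hc : 1 ≤ c) {k : ℤ} (hk : -1 ≤ k) :
    0 ≤ (U ℝ k).eval c := by
  have hk' : (0 : ℝ) ≤ k + 1 := by exact_mod_cast (by omega : (0 : ℤ) ≤ k + 1)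
  rcases hc.eq_or_lt with rfl | hc
  · rw [U_eval_one]
    exact hk'
  · have hθ := arcosh_pos hc
    have key := U_real_cosh (arcosh c) k
    rw [cosh_arcosh hc.le] at key
    refine nonneg_of_mul_nonneg_left ?_ (sinh_pos_iff.2 hθ)
    rw [key]
    exact sinh_nonneg_iff.2 (mul_nonneg hk' hθ.le)

theorem U_real_eval_cos_pi_div_nonneg {m : ℕ} (hm : 2 ≤ m) {k : ℤ} (hk : -1 ≤ k) (hkm : k < m) :
    0 ≤ (U ℝ k).eval (cos (π / m)) := by
  have hm' : (2 : ℝ) ≤ m := by exact_mod_cast hm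
  have hsin : 0 < sin (π / m) :=
    sin_pos_of_pos_of_lt_pi (by positivity) (div_lt_self pi_pos (by linarith))
  refine nonneg_of_mul_nonneg_left ?_ hsin
  rw [U_real_cos]
  have hk0 : (0 : ℝ) ≤ k + 1 := by exact_mod_cast (by omega : (0 : ℤ) ≤ k + 1)
  have hkm' : (k : ℝ) + 1 ≤ m := by exact_mod_cast (by omega : k + 1 ≤ (m : ℤ))
  apply sin_nonneg_of_nonneg_of_le_pi (by positivity)
  calc ((k : ℝ) + 1) * (π / m) ≤ m * (π / m) := by gcongr
    _ = π := by field_simp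

theorem U_real_eval_cos_pi_div_two_mul {m : ℕ} (hm : 2 ≤ m) :
    (U ℝ (2 * m)).eval (cos (π / m)) = 1 ∧ (U ℝ (2 * m - 1)).eval (cos (π / m)) = 0 := by
  have hm' : (2 : ℝ) ≤ m := by exact_mod_cast hm
  have hsin : sin (π / m) ≠ 0 :=
    (sin_pos_of_pos_of_lt_pi (by positivity) (div_lt_self pi_pos (by linarith))).ne'
  constructor
  · apply mul_right_cancel₀ hsin
    rw [U_real_cos, one_mul]
    convert sin_add_two_pi (π / m) using 2
    push_cast
    field_simp
    ring
  · apply mul_right_cancel₀ hsin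
    rw [U_real_cos, zero_mul]
    convert sin_two_pi using 2
    push_cast
    field_simp
    ring

end Polynomial.Chebyshev

namespace CoxeterSystem

variable {B : Type*} {W : Type*} [Group W] {M : CoxeterMatrix B} (cs : CoxeterSystem M W)

theorem isRightDescent_mul_of_length_add {v u : W} {i : B}
    (hlen : cs.length (v * u) = cs.length v + cs.length u) (h : cs.IsRightDescent u i) :
    cs.IsRightDescent (v * u) i := by
  unfold IsRightDescent at h ⊢
  have := cs.length_mul_le v (u * cs.simple i)
  rw [← mul_assoc] at this
  omega

theorem isRightDescent_alternatingWord {i j : B} (r : ℕ)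
    (h : cs.IsReduced (alternatingWord j i (r + 1))) :
    cs.IsRightDescent (cs.wordProd (alternatingWord j i (r + 1))) i := by
  unfold IsRightDescent
  rw [h.eq, alternatingWord_succ, wordProd_concat, simple_mul_simple_cancel_right]
  simpa using cs.length_wordProd_le (alternatingWord i j r)

theorem wordProd_alternatingWord_mul_simple {i j x : B} (hx : x = i ∨ x = j) {r : ℕ}
    (hr : r < cs.length (cs.wordProd (alternatingWord i j r) * cs.simple x)) :
    cs.wordProd (alternatingWord i j r) * cs.simple x = cs.wordProd (alternatingWord i j (r + 1)) ∨
      cs.wordProd (alternatingWord i j r) * cs.simple x =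
        cs.wordProd (alternatingWord j i (r + 1)) := by
  cases r with
  | zero => rcases hx with rfl | rfl <;> simp [alternatingWord]
  | succ r =>
    rcases hx with rfl | rfl
    · right
      rw [alternatingWord_succ j, wordProd_concat]
    · rw [alternatingWord_succ, wordProd_concat, simple_mul_simple_cancel_right] at hr
      have := cs.length_wordProd_le (alternatingWord x i r)
      simp only [length_alternatingWord] at this
      omega

theorem exists_eq_mul_alternatingWord (i j : B) (w : W) : ∃ (v : W) (r : ℕ),
    (w = v * cs.wordProd (alternatingWord i j r) ∨ w = v * cs.wordProd (alternatingWord j i r)) ∧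
    cs.length w = cs.length v + r ∧ ¬cs.IsRightDescent v i ∧ ¬cs.IsRightDescent v j := by
  induction hn : cs.length w using Nat.strong_induction_on generalizing w with
  | _ n ih =>
  by_cases hd : ∃ x, (x = i ∨ x = j) ∧ cs.IsRightDescent w x
  · obtain ⟨x, hx, hwx⟩ := hd
    have hlen := cs.isRightDescent_iff.1 hwx
    obtain ⟨v, r, hvr, hlen', hvi, hvj⟩ := ih _ (by omega) (w * cs.simple x) rfl
    refine ⟨v, r + 1, ?_, by omega, hvi, hvj⟩
    have hext (p q : B) (hxpq : x = p ∨ x = q)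
        (h : w * cs.simple x = v * cs.wordProd (alternatingWord p q r)) :
        w = v * cs.wordProd (alternatingWord p q (r + 1)) ∨
          w = v * cs.wordProd (alternatingWord q p (r + 1)) := by
      have hw : w = v * (cs.wordProd (alternatingWord p q r) * cs.simple x) := by
        rw [← mul_assoc, ← h, simple_mul_simple_cancel_right]
      have := cs.length_mul_le v (cs.wordProd (alternatingWord p q r) * cs.simple x)
      rw [← hw] at this
      rcases cs.wordProd_alternatingWord_mul_simple hxpq (r := r) (by omega) with h' | h' <;>
        simp [hw, h']
    rcases hvr with h | h
    · exact hext i j hx h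
    · exact (hext j i hx.symm h).symm
  · push Not at hd
    exact ⟨w, 0, Or.inl (by simp [alternatingWord]), by simp [hn], hd i (Or.inl rfl),
      hd j (Or.inr rfl)⟩

theorem eq_zero_or_lt_of_isReduced_alternatingWord {i j : B} {r : ℕ}
    (hred : cs.IsReduced (alternatingWord i j r))
    (hi : ¬cs.IsRightDescent (cs.wordProd (alternatingWord i j r)) i) : M i j = 0 ∨ r < M i j := by
  by_contra! h
  obtain ⟨hM, hle⟩ := h
  rcases hle.lt_or_eq with hlt | heq
  · exact cs.not_isReduced_alternatingWord i j hM hlt hred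
  have hbraid : cs.wordProd (alternatingWord i j r) = cs.wordProd (alternatingWord j i r) := by
    rw [← heq]
    nth_rw 2 [M.symmetric i j]
    exact cs.wordProd_braidWord_eq i j
  obtain ⟨r, rfl⟩ : ∃ r', r = r' + 1 := ⟨r - 1, by omega⟩
  have hred' : cs.IsReduced (alternatingWord j i (r + 1)) := by
    rw [IsReduced, ← hbraid, hred.eq, length_alternatingWord, length_alternatingWord]
  exact hi (hbraid ▸ cs.isRightDescent_alternatingWord r hred')

/-- `v ≤ w` in the right weak order. -/
def IsPrefix (v w : W) : Prop := cs.length v + cs.length (v⁻¹ * w) = cs.length w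

theorem isPrefix_refl (w : W) : cs.IsPrefix w w := by
  simp [IsPrefix]

theorem IsPrefix.mul_simple {cs : CoxeterSystem M W} {v w : W} {x : B} (h : cs.IsPrefix v w)
    (hx : cs.IsRightDescent v x) : cs.IsPrefix (v * cs.simple x) w := by
  unfold IsPrefix at h ⊢
  have h₁ := cs.isRightDescent_iff.1 hx
  have h₂ := cs.length_mul_le (cs.simple x) (v⁻¹ * w)
  have h₃ := cs.length_mul_le (v * cs.simple x) ((v * cs.simple x)⁻¹ * w)
  rw [mul_inv_cancel_left] at h₃
  rw [mul_inv_rev, inv_simple, mul_assoc] at h₃ ⊢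
  rw [length_simple] at h₂
  omega

theorem simple_mul_simple_comm {i j : B} (h : M i j = 2) :
    cs.simple i * cs.simple j = cs.simple j * cs.simple i := by
  have := cs.simple_mul_simple_pow i j
  rw [h, pow_two] at this
  rw [eq_inv_of_mul_eq_one_left this, mul_inv_rev, inv_simple, inv_simple]

theorem wordProd_reverse_cons (x : B) (t : List B) :
    cs.wordProd (x :: t).reverse = cs.wordProd t.reverse * cs.simple x := by
  simp [wordProd_append]

theorem isReduced_reverse_cons_iff {x : B} {t : List B} :
    cs.IsReduced (x :: t).reverse ↔
      cs.IsReduced t.reverse ∧ ¬cs.IsRightDescent (cs.wordProd t.reverse) x := by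
  have hle := cs.length_wordProd_le t.reverse
  unfold IsReduced
  rw [not_isRightDescent_iff, wordProd_reverse_cons]
  simp only [List.length_reverse, List.length_cons] at hle ⊢
  have := cs.length_mul_le (cs.wordProd t.reverse) (cs.simple x)
  rw [length_simple] at this
  constructor <;> intro h <;> omega

end CoxeterSystem

namespace EGCM

open Real
open Polynomial.Chebyshev hiding S
open CoxeterSystem (alternatingWord)
open scoped Matrix

section

variable {ι : Type*} [Fintype ι] (E : EGCM ι)

theorem m_eq_two_of_M_eq_zero {i j : ι} (hij : i ≠ j) (h : E.M i j = 0) : E.m i j = 2 := by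
  have hex : ∃ k : ℕ, 2 ≤ k ∧ E.M i j * E.M j i = 4 * cos (π / k) ^ 2 :=
    ⟨2, le_rfl, by simp [h]⟩
  rw [m, if_neg hij, dif_pos hex]
  exact le_antisymm (Nat.find_min' hex ⟨le_rfl, by simp [h]⟩) (Nat.find_spec hex).1

theorem two_le_m_and_M_mul_M {i j : ι} (hij : i ≠ j) (hm : E.m i j ≠ 0) :
    2 ≤ E.m i j ∧ E.M i j * E.M j i = 4 * cos (π / E.m i j) ^ 2 := by
  unfold m at hm ⊢
  rw [if_neg hij] at hm ⊢
  split_ifs at hm ⊢ with hex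
  · exact Nat.find_spec hex
  · exact absurd rfl hm

theorem four_le_M_mul_M_of_m_eq_zero {i j : ι} (hij : i ≠ j) (hm : E.m i j = 0) :
    4 ≤ E.M i j * E.M j i := by
  have hex : ¬ ∃ k : ℕ, 2 ≤ k ∧ E.M i j * E.M j i = 4 * cos (π / k) ^ 2 := by
    intro hex
    rw [m, if_neg hij, dif_pos hex] at hm
    have := (Nat.find_spec hex).1
    omega
  have hM : E.M i j ≠ 0 := fun h => hex ⟨2, le_rfl, by simp [h]⟩
  have hM' : E.M j i ≠ 0 := fun h => hM ((E.zero_iff i j).2 h)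
  rcases E.prod_cond i j hij (mul_ne_zero hM hM') with h | ⟨k, hk, hk'⟩
  · exact h
  · exact absurd ⟨k, by omega, hk'⟩ hex

theorem M_mul_M_nonneg (i j : ι) : 0 ≤ E.M i j * E.M j i := by
  rcases eq_or_ne i j with rfl | hij
  · rw [E.diag]
    norm_num
  · exact mul_nonneg_of_nonpos_of_nonpos (E.offDiag_nonpos i j hij) (E.offDiag_nonpos j i hij.symm)

noncomputable def bond (i j : ι) : ℝ := √(E.M i j * E.M j i) / 2

theorem bond_nonneg (i j : ι) : 0 ≤ E.bond i j := by
  unfold bond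
  positivity

theorem four_mul_bond_sq (i j : ι) : 4 * E.bond i j ^ 2 = E.M i j * E.M j i := by
  rw [bond, div_pow, sq_sqrt (E.M_mul_M_nonneg i j)]
  ring

theorem bond_eq_cos {i j : ι} (hij : i ≠ j) (hm : E.m i j ≠ 0) :
    E.bond i j = cos (π / E.m i j) := by
  obtain ⟨hm2, hMM⟩ := E.two_le_m_and_M_mul_M hij hm
  have hcos : 0 ≤ cos (π / E.m i j) := by
    have : (2 : ℝ) ≤ E.m i j := by exact_mod_cast hm2
    apply cos_nonneg_of_neg_pi_div_two_le_of_le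
    · linarith [show 0 ≤ π / E.m i j by positivity, pi_pos]
    · exact div_le_div_of_nonneg_left pi_pos.le (by norm_num) this
  rw [bond, hMM, show 4 * cos (π / E.m i j) ^ 2 = (2 * cos (π / E.m i j)) ^ 2 by ring,
    sqrt_sq (by positivity)]
  ring

theorem one_le_bond {i j : ι} (hij : i ≠ j) (hm : E.m i j = 0) : 1 ≤ E.bond i j := by
  have h4 := E.four_le_M_mul_M_of_m_eq_zero hij hm
  nlinarith [E.four_mul_bond_sq i j, E.bond_nonneg i j]

theorem exists_M_eq_bond_mul {i j : ι} (hij : i ≠ j) :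
    ∃ q : ℝ, 0 < q ∧ E.M i j = -(2 * E.bond i j * q) ∧ E.M j i = -(2 * E.bond i j / q) := by
  have hMM := E.four_mul_bond_sq i j
  rcases (E.bond_nonneg i j).eq_or_lt with hc | hc
  · rw [← hc] at hMM ⊢
    have hM : E.M i j = 0 := by
      rcases mul_eq_zero.1 (by linarith : E.M i j * E.M j i = 0) with h | h
      · exact h
      · exact (E.zero_iff i j).2 h
    exact ⟨1, one_pos, by simp [hM], by simp [(E.zero_iff i j).1 hM]⟩
  · have hM : E.M i j < 0 := lt_of_le_of_ne (E.offDiag_nonpos i j hij) (by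
      intro h
      rw [h, zero_mul] at hMM
      nlinarith)
    refine ⟨-E.M i j / (2 * E.bond i j), div_pos (neg_pos.2 hM) (by positivity),
      by field_simp, ?_⟩
    have := hM.ne
    field_simp
    linear_combination -hMM

instance : Std.Symm (CommMove E) where
  symm _ _ := fun ⟨u, v, x, y, hm, hl, hl'⟩ => ⟨u, v, y, x, E.m_symm x y ▸ hm, hl', hl⟩

theorem reflTransGen_commMove_cons (x : ι) {a b : List ι}
    (h : Relation.ReflTransGen (CommMove E) a b) :
    Relation.ReflTransGen (CommMove E) (x :: a) (x :: b) :=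
  h.lift (x :: ·) fun _ _ ⟨u, v, p, q, hm, hc, hd⟩ =>
    ⟨x :: u, v, p, q, hm, by simp [hc], by simp [hd]⟩

end

variable {ι : Type*} [Fintype ι] [DecidableEq ι] (E : EGCM ι)

theorem S_apply (i : ι) (v : ι → ℝ) :
    E.S i v = v - (∑ k, E.M i k * v k) • Pi.single i 1 := by
  simp [S, LinearMap.sum_apply]

theorem S_eq_self {i : ι} {v : ι → ℝ} (h : ∑ k, E.M i k * v k = 0) : E.S i v = v := by
  simp [S_apply, h]

theorem S_single (i j : ι) :
    E.S i (Pi.single j 1) = Pi.single j 1 - E.M i j • Pi.single i 1 := by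
  simp [S_apply, Pi.single_apply]

theorem S_single_self (i : ι) : E.S i (Pi.single i 1) = -Pi.single i 1 := by
  rw [S_single, E.diag, two_smul, sub_add_cancel_left]

theorem S_mul_self (i : ι) : E.S i * E.S i = 1 := by
  refine LinearMap.ext fun v => ?_
  conv_lhs => rw [Module.End.mul_apply, S_apply E i v]
  rw [map_sub, map_smul, S_single_self, S_apply E i v, smul_neg, sub_neg_eq_add, sub_add_cancel,
    Module.End.one_apply]

section Rank2

variable {E} {i j : ι} {c q : ℝ}

theorem S_left_apply (hq : q ≠ 0) (hMij : E.M i j = -(2 * c * q)) (A B : ℝ) :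
    E.S i (A • Pi.single i 1 + (B / q) • Pi.single j 1) =
      (2 * c * B - A) • Pi.single i 1 + (B / q) • Pi.single j 1 := by
  rw [map_add, map_smul, map_smul, S_single_self, S_single, hMij]
  ext t
  simp only [Pi.add_apply, Pi.smul_apply, Pi.neg_apply, Pi.sub_apply, smul_eq_mul]
  field_simp
  ring

theorem S_right_apply (hq : q ≠ 0) (hMji : E.M j i = -(2 * c / q)) (A B : ℝ) :
    E.S j (A • Pi.single i 1 + (B / q) • Pi.single j 1) =
      A • Pi.single i 1 + ((2 * c * A - B) / q) • Pi.single j 1 := by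
  rw [map_add, map_smul, map_smul, S_single_self, S_single, hMji]
  ext t
  simp only [Pi.add_apply, Pi.smul_apply, Pi.neg_apply, Pi.sub_apply, smul_eq_mul]
  field_simp
  ring

/-- In the coordinates `A • eᵢ + (B / q) • eⱼ`, `Sᵢ` and `Sⱼ` act by steps of the Chebyshev
recursion `Uₖ₊₁ = 2 c Uₖ - Uₖ₋₁`. -/
theorem S_mul_S_pow_apply_single (hq : q ≠ 0) (hMij : E.M i j = -(2 * c * q))
    (hMji : E.M j i = -(2 * c / q)) (n : ℕ) :
    ((E.S i * E.S j) ^ n) (Pi.single i 1) =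
      (U ℝ (2 * n)).eval c • Pi.single i 1 + ((U ℝ (2 * n - 1)).eval c / q) • Pi.single j 1 := by
  induction n with
  | zero => simp
  | succ n ih =>
    rw [pow_succ', Module.End.mul_apply, ih, Module.End.mul_apply, S_right_apply hq hMji,
      S_left_apply hq hMij]
    have h₁ : (U ℝ (2 * ↑(n + 1) - 1)).eval c =
        2 * c * (U ℝ (2 * n)).eval c - (U ℝ (2 * n - 1)).eval c := by
      rw [← U_real_eval_add_one]
      congr 2
      push_cast
      ring
    have h₂ : (U ℝ (2 * ↑(n + 1))).eval c =
        2 * c * (U ℝ (2 * ↑(n + 1) - 1)).eval c - (U ℝ (2 * n)).eval c := by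
      rw [← sub_add_cancel (2 * ((n + 1 : ℕ) : ℤ)) 1, U_real_eval_add_one, add_sub_cancel_right,
        show 2 * ((n + 1 : ℕ) : ℤ) - 1 - 1 = 2 * n by push_cast; ring]
    rw [h₂, h₁]

end Rank2

theorem eq_one_of_fixes {i j : ι} (hdet : E.M i j * E.M j i ≠ 4)
    {T : Module.End ℝ (ι → ℝ)} (hi : T (Pi.single i 1) = Pi.single i 1)
    (hj : T (Pi.single j 1) = Pi.single j 1) (hfix : ∀ v, E.S i v = v → E.S j v = v → T v = v) :
    T = 1 := by
  refine LinearMap.ext fun v => ?_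
  set L₁ := ∑ k, E.M i k * v k
  set L₂ := ∑ k, E.M j k * v k
  have hD : 4 - E.M i j * E.M j i ≠ 0 := sub_ne_zero.2 hdet.symm
  -- `a • eᵢ + b • eⱼ` has the same pairings with the rows `i`, `j` of `M` as `v`
  set a := (2 * L₁ - E.M i j * L₂) / (4 - E.M i j * E.M j i)
  set b := (2 * L₂ - E.M j i * L₁) / (4 - E.M i j * E.M j i)
  set w : ι → ℝ := v - a • Pi.single i 1 - b • Pi.single j 1
  have hrow (x : ι) : ∑ k, E.M x k * w k = ∑ k, E.M x k * v k - a * E.M x i - b * E.M x j := by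
    simp [w, mul_sub, Finset.sum_sub_distrib, Pi.single_apply, mul_comm]
  have hwi : E.S i w = w := E.S_eq_self (by
    rw [hrow, E.diag]
    simp only [a, b]
    field_simp
    ring)
  have hwj : E.S j w = w := E.S_eq_self (by
    rw [hrow, E.diag]
    simp only [a, b]
    field_simp
    ring)
  have hv : v = w + a • Pi.single i 1 + b • Pi.single j 1 := by
    simp only [w]
    abel
  rw [hv, map_add, map_add, map_smul, map_smul, hi, hj, hfix w hwi hwj, Module.End.one_apply]

theorem S_mul_S_pow_m_apply_single {i j : ι} (hij : i ≠ j) (hm : E.m i j ≠ 0) :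
    ((E.S i * E.S j) ^ E.m i j) (Pi.single i 1) = Pi.single i 1 := by
  obtain ⟨q, hq, hMij, hMji⟩ := E.exists_M_eq_bond_mul hij
  obtain ⟨hU, hU'⟩ := U_real_eval_cos_pi_div_two_mul (E.two_le_m_and_M_mul_M hij hm).1
  rw [S_mul_S_pow_apply_single hq.ne' hMij hMji, E.bond_eq_cos hij hm, hU, hU', zero_div,
    zero_smul, one_smul, add_zero]

theorem S_mul_S_pow_m (i j : ι) : (E.S i * E.S j) ^ E.m i j = 1 := by
  rcases eq_or_ne i j with rfl | hij
  · rw [show E.m i i = 1 by simp [m], pow_one, S_mul_self]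
  rcases eq_or_ne (E.m i j) 0 with hm | hm
  · rw [hm, pow_zero]
  obtain ⟨hm2, hMM⟩ := E.two_le_m_and_M_mul_M hij hm
  have hdet : E.M i j * E.M j i ≠ 4 := by
    have hsin : 0 < sin (π / E.m i j) := sin_pos_of_pos_of_lt_pi (by positivity)
      (div_lt_self pi_pos (by exact_mod_cast (by omega : 1 < E.m i j)))
    rw [hMM]
    nlinarith [sin_sq_add_cos_sq (π / E.m i j)]
  -- `(Sᵢ Sⱼ)ᵐ` and `(Sⱼ Sᵢ)ᵐ` are mutually inverse, and the latter fixes `eⱼ`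
  have hinv : (E.S i * E.S j) ^ E.m i j * (E.S j * E.S i) ^ E.m i j = 1 := by
    have h₁ : E.S i * E.S j * (E.S j * E.S i) = 1 := by
      rw [mul_assoc, ← mul_assoc (E.S j), S_mul_self, one_mul, S_mul_self]
    have h₂ : E.S j * E.S i * (E.S i * E.S j) = 1 := by
      rw [mul_assoc, ← mul_assoc (E.S i), S_mul_self, one_mul, S_mul_self]
    rw [← Commute.mul_pow (h₁.trans h₂.symm), h₁, one_pow]
  have hj : ((E.S j * E.S i) ^ E.m i j) (Pi.single j 1) = Pi.single j 1 := by
    rw [E.m_symm] at hm ⊢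
    exact E.S_mul_S_pow_m_apply_single hij.symm hm
  refine E.eq_one_of_fixes hdet (E.S_mul_S_pow_m_apply_single hij hm) ?_ ?_
  · conv_lhs => rw [← hj, ← Module.End.mul_apply, hinv]
    rfl
  · intro v hvi hvj
    induction E.m i j with
    | zero => rfl
    | succ n ih => rw [pow_succ, Module.End.mul_apply, Module.End.mul_apply, hvj, hvi, ih]

variable {W : Type*} [Group W] (cs : CoxeterSystem E.cox W)

noncomputable def geomRep : W →* Module.End ℝ (ι → ℝ) :=
  cs.lift ⟨E.S, E.S_mul_S_pow_m⟩

@[simp]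
theorem geomRep_simple (i : ι) : E.geomRep cs (cs.simple i) = E.S i :=
  cs.lift_apply_simple _ i

theorem geomRep_alternatingWord_single {i j : ι} (hij : i ≠ j) {r : ℕ}
    (hr : E.m i j = 0 ∨ r < E.m i j) :
    ∃ a b : ℝ, 0 ≤ a ∧ 0 ≤ b ∧
      E.geomRep cs (cs.wordProd (alternatingWord i j r)) (Pi.single i 1) =
        a • Pi.single i 1 + b • Pi.single j 1 := by
  obtain ⟨q, hq, hMij, hMji⟩ := E.exists_M_eq_bond_mul hij
  have hU (k : ℤ) (hk : -1 ≤ k) (hkr : k ≤ r) : 0 ≤ (U ℝ k).eval (E.bond i j) := by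
    rcases hr with hm | hrm
    · exact U_real_eval_nonneg_of_one_le (E.one_le_bond hij hm) hk
    · have hm : E.m i j ≠ 0 := by omega
      rw [E.bond_eq_cos hij hm]
      exact U_real_eval_cos_pi_div_nonneg (E.two_le_m_and_M_mul_M hij hm).1 hk (by omega)
  rw [cs.prod_alternatingWord_eq_mul_pow]
  obtain ⟨n, rfl | rfl⟩ := Nat.even_or_odd' r
  · rw [if_pos (even_two_mul n), Nat.mul_div_cancel_left n two_pos, one_mul, map_pow, map_mul,
      geomRep_simple, geomRep_simple, S_mul_S_pow_apply_single hq.ne' hMij hMji]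
    exact ⟨_, _, hU _ (by omega) (by push_cast; omega),
      div_nonneg (hU _ (by omega) (by push_cast; omega)) hq.le, rfl⟩
  · rw [if_neg (Nat.not_even_two_mul_add_one n), show (2 * n + 1) / 2 = n by omega, map_mul,
      map_pow, map_mul, geomRep_simple, geomRep_simple, Module.End.mul_apply,
      S_mul_S_pow_apply_single hq.ne' hMij hMji, S_right_apply hq.ne' hMji,
      ← U_real_eval_add_one]
    exact ⟨_, _, hU _ (by omega) (by push_cast; omega),
      div_nonneg (hU _ (by omega) (by push_cast; omega)) hq.le, rfl⟩

theorem geomRep_single_nonneg {w : W} {i : ι} (h : ¬cs.IsRightDescent w i) :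
    0 ≤ E.geomRep cs w (Pi.single i 1) := by
  induction hn : cs.length w using Nat.strong_induction_on generalizing w i with
  | _ n ih =>
  rcases eq_or_ne w 1 with rfl | hw1
  · simp [Pi.single_nonneg]
  obtain ⟨j, hj⟩ := cs.exists_rightDescent_of_ne_one hw1
  have hij : i ≠ j := by
    rintro rfl
    exact h hj
  -- `v` is the shortest element of the coset `w ⟨sᵢ, sⱼ⟩`
  obtain ⟨v, r, hvr, hlen, hvi, hvj⟩ := cs.exists_eq_mul_alternatingWord i j w
  have hred (p q : ι) (h : w = v * cs.wordProd (alternatingWord p q r)) :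
      cs.length (cs.wordProd (alternatingWord p q r)) = r := by
    have := cs.length_mul_le v (cs.wordProd (alternatingWord p q r))
    have := cs.length_wordProd_le (alternatingWord p q r)
    rw [← h, CoxeterSystem.length_alternatingWord] at *
    omega
  have hr : 0 < r := by
    refine Nat.pos_of_ne_zero fun hr => hvj ?_
    subst hr
    have hwv : w = v := by simpa [CoxeterSystem.alternatingWord] using hvr
    exact hwv ▸ hj
  -- the dihedral factor ends with `j`, since one ending with `i` would make `i` a descent of `w`
  have hw : w = v * cs.wordProd (alternatingWord i j r) := by
    refine hvr.resolve_right fun hw => h ?_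
    obtain ⟨r, rfl⟩ : ∃ r', r = r' + 1 := ⟨r - 1, by omega⟩
    rw [hw]
    refine cs.isRightDescent_mul_of_length_add (by rw [← hw, hred j i hw, hlen]) ?_
    exact cs.isRightDescent_alternatingWord r (by
      rw [CoxeterSystem.IsReduced, hred j i hw, CoxeterSystem.length_alternatingWord])
  have hdih : E.m i j = 0 ∨ r < E.m i j := by
    refine cs.eq_zero_or_lt_of_isReduced_alternatingWord
      (by rw [CoxeterSystem.IsReduced, hred i j hw, CoxeterSystem.length_alternatingWord])
      fun hd => h ?_
    rw [hw]
    exact cs.isRightDescent_mul_of_length_add (by rw [← hw, hred i j hw, hlen]) hd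
  obtain ⟨a, b, ha, hb, hab⟩ := E.geomRep_alternatingWord_single cs hij hdih
  rw [hw, map_mul, Module.End.mul_apply, hab, map_add, map_smul, map_smul]
  exact add_nonneg (smul_nonneg ha (ih _ (by omega) hvi rfl))
    (smul_nonneg hb (ih _ (by omega) hvj rfl))

theorem geomRep_single_nonpos {w : W} {i : ι} (h : cs.IsRightDescent w i) :
    E.geomRep cs w (Pi.single i 1) ≤ 0 := by
  have h' := E.geomRep_single_nonneg cs (cs.isRightDescent_iff_not_isRightDescent_mul.1 h)
  rwa [map_mul, Module.End.mul_apply, geomRep_simple, S_single_self, map_neg, neg_nonneg] at h'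

theorem geomRep_apply_ne_zero (w : W) {v : ι → ℝ} (hv : v ≠ 0) : E.geomRep cs w v ≠ 0 := by
  intro h
  apply hv
  simpa [← Module.End.mul_apply, ← map_mul] using congrArg (E.geomRep cs w⁻¹) h

theorem isRightDescent_iff_geomRep_single_nonpos {w : W} {i : ι} :
    cs.IsRightDescent w i ↔ E.geomRep cs w (Pi.single i 1) ≤ 0 := by
  refine ⟨E.geomRep_single_nonpos cs, fun h => by_contra fun hd => ?_⟩
  exact E.geomRep_apply_ne_zero cs w (by simp) (le_antisymm h (E.geomRep_single_nonneg cs hd))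

/-- The position reached from `lam` by firing a word with product `u`: positions are the
functionals `lam ⬝ᵥ ·` on the root space, and firing node `x` pulls them back along `sₓ`. -/
noncomputable def position (lam : ι → ℝ) (u : W) : ι → ℝ :=
  fun k => lam ⬝ᵥ E.geomRep cs u⁻¹ (Pi.single k 1)

theorem position_one (lam : ι → ℝ) : E.position cs lam 1 = lam := by
  ext k
  simp [position]

theorem fire_position (lam : ι → ℝ) (u : W) (x : ι) :
    E.fire (E.position cs lam u) x = E.position cs lam (cs.simple x * u) := by
  ext k
  simp [position, fire, S_single, dotProduct_sub]

theorem fireList_position (lam : ι → ℝ) (c : List ι) (u : W) :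
    E.fireList (E.position cs lam u) c = E.position cs lam (cs.wordProd c.reverse * u) := by
  induction c generalizing u with
  | nil => simp [fireList]
  | cons x c ih => rw [fireList, fire_position, ih, cs.wordProd_reverse_cons, mul_assoc]

theorem fireList_eq_position (lam : ι → ℝ) (c : List ι) :
    E.fireList lam c = E.position cs lam (cs.wordProd c.reverse) := by
  simpa [position_one] using E.fireList_position cs lam c 1

theorem geomRep_nonneg_of_mem_minReps {J : Set ι} {w : W} (hw : w ∈ minReps cs J)
    {β : ι → ℝ} (hβ : 0 ≤ β) (hsupp : ∀ t ∉ J, β t = 0) : 0 ≤ E.geomRep cs w β := by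
  rw [← Finset.univ_sum_single β, map_sum]
  refine Finset.sum_nonneg fun t _ => ?_
  by_cases ht : t ∈ J
  · rw [← mul_one (β t), ← smul_eq_mul, Pi.single_smul, map_smul]
    exact smul_nonneg (hβ t) (E.geomRep_single_nonneg cs (hw t ht).not_gt)
  · rw [hsupp t ht, Pi.single_zero, map_zero]

theorem position_pos {J : Set ι} {lam : ι → ℝ} (hlam : JcDominant J lam) {w : W}
    (hw : w ∈ minReps cs J) {v : W} (hv : cs.IsPrefix v w) {k : ι} (hk : cs.IsRightDescent v k) :
    0 < E.position cs lam (v⁻¹ * w) k := by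
  set β := E.geomRep cs (w⁻¹ * v) (Pi.single k 1)
  have hpos : E.position cs lam (v⁻¹ * w) k = lam ⬝ᵥ β := by simp [position, β]
  have hlam₀ : 0 ≤ lam := fun t => by
    by_cases ht : t ∈ J
    · exact (hlam.1 t ht).ge
    · exact (hlam.2 t ht).le
  -- `w⁻¹ v sₖ` is longer than `w⁻¹ v` since `v sₖ` is again a prefix of `w`
  have hβ : 0 ≤ β := by
    refine E.geomRep_single_nonneg cs fun hd => ?_
    have h₁ := hv.mul_simple hk
    have h₂ := cs.isRightDescent_iff.1 hk
    unfold CoxeterSystem.IsRightDescent at hd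
    unfold CoxeterSystem.IsPrefix at hv h₁
    rw [← cs.length_inv, ← cs.length_inv (w⁻¹ * v)] at hd
    simp only [mul_inv_rev, inv_inv, cs.inv_simple, mul_assoc] at hd h₁
    omega
  rw [hpos]
  refine (dotProduct_nonneg_of_nonneg hlam₀ hβ).lt_of_ne fun h₀ => ?_
  -- the pairing vanishes, so `β` is supported on `J`, where `w` has no descents
  have hsupp (t : ι) (ht : t ∉ J) : β t = 0 := by
    have := (Finset.sum_eq_zero_iff_of_nonneg fun t _ => mul_nonneg (hlam₀ t) (hβ t)).1 h₀.symm t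
      (Finset.mem_univ t)
    exact (mul_eq_zero.1 this).resolve_left (hlam.2 t ht).ne'
  have hwβ : E.geomRep cs w β = E.geomRep cs v (Pi.single k 1) := by
    simp [β, ← Module.End.mul_apply, ← map_mul]
  refine E.geomRep_apply_ne_zero cs v (v := Pi.single k 1) (by simp) (le_antisymm
    (E.geomRep_single_nonpos cs hk) ?_)
  exact hwβ ▸ E.geomRep_nonneg_of_mem_minReps cs hw hβ hsupp

theorem legal_position {J : Set ι} {lam : ι → ℝ} (hlam : JcDominant J lam) {w : W}
    (hw : w ∈ minReps cs J) (c : List ι) {u v : W} (hv : cs.IsPrefix v w)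
    (hc : v = u * cs.wordProd c.reverse) (hlen : cs.length v = cs.length u + c.length) :
    E.Legal (E.position cs lam (v⁻¹ * w)) c := by
  induction c generalizing v with
  | nil => trivial
  | cons k d ih =>
    have hvk : v * cs.simple k = u * cs.wordProd d.reverse := by
      rw [hc, cs.wordProd_reverse_cons, ← mul_assoc, cs.simple_mul_simple_cancel_right]
    have hk : cs.IsRightDescent v k := by
      have := cs.length_mul_le u (cs.wordProd d.reverse)
      have := cs.length_wordProd_le d.reverse
      simp only [CoxeterSystem.IsRightDescent, hvk, List.length_reverse, List.length_cons] at *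
      omega
    refine ⟨E.position_pos cs hlam hw hv hk, ?_⟩
    rw [fire_position, show cs.simple k * (v⁻¹ * w) = (v * cs.simple k)⁻¹ * w by
      rw [mul_inv_rev, cs.inv_simple, mul_assoc]]
    have := cs.isRightDescent_iff.1 hk
    exact ih (hv.mul_simple hk) hvk (by simp only [List.length_cons] at hlen; omega)

theorem legal_of_isPrefix {J : Set ι} {lam : ι → ℝ} (hlam : JcDominant J lam) {w : W}
    (hw : w ∈ minReps cs J) {v : W} (hv : cs.IsPrefix v w) {c : List ι}
    (hc : cs.IsReduced c.reverse) (hcv : cs.wordProd c.reverse = v⁻¹ * w) : E.Legal lam c := by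
  have := E.legal_position cs hlam hw c (cs.isPrefix_refl w) (u := v)
    (by rw [hcv, mul_inv_cancel_left]) (by rw [← hv, ← hcv, hc.eq, List.length_reverse])
  rwa [inv_mul_cancel, position_one] at this

theorem M_eq_zero_of_isRightDescent {J : Set ι} {lam : ι → ℝ} (hlam : JcDominant J lam)
    (hAF : E.AdjacencyFree lam) {w : W} (hw : w ∈ minReps cs J) {v : W} (hv : cs.IsPrefix v w)
    {x y : ι} (hxy : x ≠ y) (hx : cs.IsRightDescent v x) (hy : cs.IsRightDescent v y) :
    E.M x y = 0 := by
  obtain ⟨ω, hω, hωv⟩ := cs.exists_isReduced (v⁻¹ * w)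
  have hc : cs.wordProd ω.reverse.reverse = v⁻¹ * w := by rw [List.reverse_reverse, hωv]
  have hpos := E.fireList_eq_position cs lam ω.reverse
  rw [hc] at hpos
  by_contra hM
  refine hAF ω.reverse (E.legal_of_isPrefix cs hlam hw hv (by rwa [List.reverse_reverse]) hc)
    ⟨x, y, ⟨hxy, hM⟩, ?_, ?_⟩ <;> rw [hpos]
  exacts [E.position_pos cs hlam hw hv hx, E.position_pos cs hlam hw hv hy]

theorem isRightDescent_mul_simple_of_M_eq_zero {v : W} {x y : ι} (hM : E.M x y = 0)
    (hy : cs.IsRightDescent v y) : cs.IsRightDescent (v * cs.simple x) y := by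
  rw [isRightDescent_iff_geomRep_single_nonpos] at hy ⊢
  rwa [map_mul, Module.End.mul_apply, geomRep_simple, S_single, hM, zero_smul, sub_zero]

theorem exists_isReduced_of_M_eq_zero {v : W} {x y : ι} (hM : E.M x y = 0)
    (hx : cs.IsRightDescent v x) (hy : cs.IsRightDescent v y) :
    ∃ r : List ι, cs.IsReduced (y :: r).reverse ∧ cs.wordProd (y :: r).reverse = v * cs.simple x ∧
      cs.IsReduced (x :: r).reverse ∧ cs.wordProd (x :: r).reverse = v * cs.simple y := by
  have hxy : x ≠ y := by
    rintro rfl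
    simp [E.diag] at hM
  have hcomm : v * cs.simple x * cs.simple y = v * cs.simple y * cs.simple x := by
    rw [mul_assoc, cs.simple_mul_simple_comm (E.m_eq_two_of_M_eq_zero hxy hM), ← mul_assoc]
  obtain ⟨ω, hω, hωv⟩ := cs.exists_isReduced (v * cs.simple x * cs.simple y)
  refine ⟨ω.reverse, ?_, ?_, ?_, ?_⟩ <;>
    simp only [cs.isReduced_reverse_cons_iff, cs.wordProd_reverse_cons, List.reverse_reverse, ← hωv]
  · exact ⟨hω, cs.isRightDescent_iff_not_isRightDescent_mul.1
      (E.isRightDescent_mul_simple_of_M_eq_zero cs hM hy)⟩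
  · exact cs.simple_mul_simple_cancel_right _
  · exact ⟨hω, hcomm ▸ cs.isRightDescent_iff_not_isRightDescent_mul.1
      (E.isRightDescent_mul_simple_of_M_eq_zero cs ((E.zero_iff x y).1 hM) hx)⟩
  · rw [hcomm, cs.simple_mul_simple_cancel_right]

theorem fullyCommutative_of_isPrefix {w : W}
    (hcomm : ∀ v x y, cs.IsPrefix v w → x ≠ y → cs.IsRightDescent v x → cs.IsRightDescent v y →
      E.M x y = 0) {v : W} (hv : cs.IsPrefix v w) : FullyCommutative E cs v := by
  induction hn : cs.length v generalizing v with
  | zero =>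
    intro l l' hl hlv hl' hl'v
    rw [List.eq_nil_of_length_eq_zero (l := l) (by rw [← List.length_reverse, ← hl.eq, hlv, hn]),
      List.eq_nil_of_length_eq_zero (l := l') (by rw [← List.length_reverse, ← hl'.eq, hl'v, hn])]
  | succ n ih =>
    intro l l' hl hlv hl' hl'v
    obtain _ | ⟨x, t⟩ := l
    · simp [← hlv] at hn
    obtain _ | ⟨y, t'⟩ := l'
    · simp [← hl'v] at hn
    rw [cs.isReduced_reverse_cons_iff] at hl hl'
    rw [cs.wordProd_reverse_cons] at hlv hl'v
    have htv : cs.wordProd t.reverse = v * cs.simple x := by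
      rw [← hlv, cs.simple_mul_simple_cancel_right]
    have ht'v : cs.wordProd t'.reverse = v * cs.simple y := by
      rw [← hl'v, cs.simple_mul_simple_cancel_right]
    have hx := cs.isRightDescent_iff_not_isRightDescent_mul.2 (htv ▸ hl.2)
    have hy := cs.isRightDescent_iff_not_isRightDescent_mul.2 (ht'v ▸ hl'.2)
    have hnx := cs.isRightDescent_iff.1 hx
    have hny := cs.isRightDescent_iff.1 hy
    have ihx := ih (hv.mul_simple hx) (by omega)
    have ihy := ih (hv.mul_simple hy) (by omega)
    rcases eq_or_ne x y with rfl | hxy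
    · exact E.reflTransGen_commMove_cons x (ihx t t' hl.1 htv hl'.1 ht'v)
    have hM := hcomm v x y hv hxy hx hy
    obtain ⟨r, hyr, hyrv, hxr, hxrv⟩ := E.exists_isReduced_of_M_eq_zero cs hM hx hy
    have hswap : CommMove E (x :: y :: r) (y :: x :: r) :=
      ⟨[], r, x, y, E.m_eq_two_of_M_eq_zero hxy hM, rfl, rfl⟩
    exact (E.reflTransGen_commMove_cons x (ihx t _ hl.1 htv hyr hyrv)).trans <|
      (Relation.ReflTransGen.single hswap).trans <|
        Std.Symm.symm _ _ (E.reflTransGen_commMove_cons y (ihy t' _ hl'.1 ht'v hxr hxrv))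

end EGCM

theorem egcm_adjacencyFree_implies_fullyCommutative_general {ι : Type*} [Fintype ι]
    (E : EGCM ι) {W : Type*} [Group W] (cs : CoxeterSystem E.cox W)
    (J : Set ι)
    (lam : ι → ℝ) (hlam : EGCM.JcDominant J lam) (hAF : E.AdjacencyFree lam) :
    ∀ w ∈ minReps cs J, FullyCommutative E cs w := by
  classical
  intro w hw
  exact E.fullyCommutative_of_isPrefix cs
    (fun _ _ _ hv hxy hx hy => E.M_eq_zero_of_isRightDescent cs hlam hAF hw hv hxy hx hy)
    (cs.isPrefix_refl w)

/-- **Proposition 4.2 (1).** If `W_J` is finite and some adjacency-free position is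
`Jᶜ`-dominant, then every element of `W^J` is fully commutative. -/
theorem egcm_adjacencyFree_implies_fullyCommutative {ι : Type*} [Fintype ι]
    (E : EGCM ι) {W : Type*} [Group W] (cs : CoxeterSystem E.cox W)
    (J : Set ι) (hfin : Set.Finite (parabolic cs J : Set W))
    (lam : ι → ℝ) (hlam : EGCM.JcDominant J lam) (hAF : E.AdjacencyFree lam) :
    ∀ w ∈ minReps cs J, FullyCommutative E cs w :=
  egcm_adjacencyFree_implies_fullyCommutative_general E cs J lam hlam hAF
end

section
/- Suppose the E-GCM graph (Γ,M) has underlying graph a path γ_1 — γ_2 — ⋯ — γ_n (node i adjacent precisely to nodes i−1 and i+1) and M_{ij}M_{ji} = 1 for every edge (an E-Coxeter graph of type 𝒜_n). Then every fundamental position ω_i is adjacency-free. -/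
namespace EGCM

variable {n : ℕ}

/-- The value `1` past the end of the path is junk. -/
noncomputable def pathScale (E : EGCM (Fin n)) : ℕ → ℝ
  | 0 => 1
  | j + 1 => if h : j + 1 < n then -E.M ⟨j + 1, h⟩ ⟨j, j.lt_of_succ_lt h⟩ * E.pathScale j else 1

lemma pathScale_pos (E : EGCM (Fin n))
    (hadj : ∀ i j : Fin n, E.Adj i j ↔ (i.val + 1 = j.val ∨ j.val + 1 = i.val)) (j : ℕ) :
    0 < E.pathScale j := by
  induction j with
  | zero => simp [pathScale]
  | succ j ih =>
    rw [pathScale]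
    split_ifs with h
    · obtain ⟨hne, hM⟩ := (hadj ⟨j + 1, h⟩ ⟨j, j.lt_of_succ_lt h⟩).2 (Or.inr rfl)
      have hneg : E.M ⟨j + 1, h⟩ ⟨j, _⟩ < 0 := (E.offDiag_nonpos _ _ hne).lt_of_ne hM
      exact mul_pos (neg_pos.2 hneg) ih
    · exact one_pos

lemma pathScale_mul_M (E : EGCM (Fin n))
    (hadj : ∀ i j : Fin n, E.Adj i j ↔ (i.val + 1 = j.val ∨ j.val + 1 = i.val))
    (hprod : ∀ i j : Fin n, E.Adj i j → E.M i j * E.M j i = 1)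
    (t j : Fin n) (htj : t.val + 1 = j.val ∨ j.val + 1 = t.val) :
    E.pathScale j * E.M t j = -E.pathScale t := by
  obtain ⟨t, ht⟩ := t
  obtain ⟨j, hj⟩ := j
  rcases htj with rfl | rfl
  · have h1 := hprod ⟨t + 1, hj⟩ ⟨t, ht⟩ ((hadj _ _).2 (Or.inr rfl))
    rw [pathScale, dif_pos hj]
    linear_combination (-E.pathScale t) * h1
  · simp only [pathScale, dif_pos ht]
    ring

/-- In the rescaled coordinates `d j * lam j = x j - x (j + 1)` firing `t` swaps `x t` and
`x (t + 1)`: the numbers game of type `A` as the action of transpositions. -/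
lemma mul_fire_eq_sub_swap (E : EGCM (Fin n))
    (hadj : ∀ i j : Fin n, E.Adj i j ↔ (i.val + 1 = j.val ∨ j.val + 1 = i.val))
    {d : Fin n → ℝ} (hd : ∀ t j : Fin n, t.val + 1 = j.val ∨ j.val + 1 = t.val →
      d j * E.M t j = -d t)
    {lam : Fin n → ℝ} {x : ℕ → ℝ} (hx : ∀ j : Fin n, d j * lam j = x j - x (j.val + 1))
    (t j : Fin n) :
    d j * E.fire lam t j = x (Equiv.swap t.val (t.val + 1) j)
      - x (Equiv.swap t.val (t.val + 1) (j.val + 1)) := by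
  have hfire : d j * E.fire lam t j = d j * lam j - d j * E.M t j * lam t := by
    simp only [fire]
    ring
  rw [hfire]
  rcases eq_or_ne j t with rfl | hne
  · rw [E.diag, Equiv.swap_apply_left, Equiv.swap_apply_right]
    linear_combination (-1 : ℝ) * hx j
  have hne' : j.val ≠ t.val := Fin.val_injective.ne hne
  by_cases hleft : j.val + 1 = t.val
  · rw [hd t j (Or.inr hleft), Equiv.swap_apply_of_ne_of_ne hne' (by omega), hleft,
      Equiv.swap_apply_left]
    linear_combination hx j + hx t - congrArg x hleft
  by_cases hright : t.val + 1 = j.val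
  · rw [hd t j (Or.inl hright), ← hright, Equiv.swap_apply_right,
      Equiv.swap_apply_of_ne_of_ne (by omega) (by omega)]
    linear_combination hx j + hx t - congrArg (fun k => x k - x (k + 1)) hright
  have hM : E.M t j = 0 := by
    by_contra hM
    have := (hadj t j).1 ⟨hne.symm, hM⟩
    omega
  rw [hM, Equiv.swap_apply_of_ne_of_ne hne' (by omega),
    Equiv.swap_apply_of_ne_of_ne (by omega) (by omega)]
  linear_combination hx j

lemma exists_mul_fireList_eq_sub (E : EGCM (Fin n))
    (hadj : ∀ i j : Fin n, E.Adj i j ↔ (i.val + 1 = j.val ∨ j.val + 1 = i.val))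
    {d : Fin n → ℝ} (hd : ∀ t j : Fin n, t.val + 1 = j.val ∨ j.val + 1 = t.val →
      d j * E.M t j = -d t)
    (s : List (Fin n)) {lam : Fin n → ℝ} {x : ℕ → ℝ}
    (hx : ∀ j : Fin n, d j * lam j = x j - x (j.val + 1)) :
    ∃ y : ℕ → ℝ, Set.range y ⊆ Set.range x ∧
      ∀ j : Fin n, d j * E.fireList lam s j = y j - y (j.val + 1) := by
  induction s generalizing lam x with
  | nil => exact ⟨x, subset_rfl, hx⟩
  | cons t s ih =>
    obtain ⟨y, hy, hfire⟩ := ih (x := x ∘ Equiv.swap t.val (t.val + 1)) (E.mul_fire_eq_sub_swap hadj hd hx t)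
    exact ⟨y, hy.trans (Set.range_comp_subset_range _ x), hfire⟩

end EGCM

lemma not_lt_lt_of_range_subset_pair {α β : Type*} [LinearOrder β] {x : α → β} {a b : β}
    (hx : Set.range x ⊆ {a, b}) (k l m : α) : ¬ (x l < x k ∧ x m < x l) := by
  rintro ⟨hkl, hlm⟩
  have mem : ∀ p, x p = a ∨ x p = b := fun p => hx ⟨p, rfl⟩
  rcases mem k with hk | hk <;> rcases mem l with hl | hl <;> rcases mem m with hm | hm <;>
    simp_all [lt_asymm]

lemma mul_single_one_eq_sub {n : ℕ} (d : Fin n → ℝ) (i j : Fin n) :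
    d j * (Pi.single i 1 : Fin n → ℝ) j =
      (if j.val ≤ i.val then d i else 0) - (if j.val + 1 ≤ i.val then d i else 0) := by
  rcases eq_or_ne j i with rfl | hne
  · simp
  · have hne' : j.val ≠ i.val := Fin.val_injective.ne hne
    rw [Pi.single_eq_of_ne hne, mul_zero]
    split_ifs <;> first | (exfalso; omega) | ring

lemma not_pos_and_pos_of_mul_eq_sub {n : ℕ} {d lam : Fin n → ℝ} {x : ℕ → ℝ} {a b : ℝ}
    (hd : ∀ j, 0 < d j) (hx : ∀ j : Fin n, d j * lam j = x j - x (j.val + 1))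
    (hx_two : Set.range x ⊆ {a, b}) {j k : Fin n} (hjk : j.val + 1 = k.val) :
    ¬ (0 < lam j ∧ 0 < lam k) := by
  rintro ⟨hj, hk⟩
  have hj' := hx j ▸ mul_pos (hd j) hj
  have hk' := hx k ▸ mul_pos (hd k) hk
  rw [← hjk] at hk'
  exact not_lt_lt_of_range_subset_pair hx_two j.val (j.val + 1) (j.val + 1 + 1)
    ⟨by linarith, by linarith⟩

/-- **Theorem 4.3 (type 𝒜ₙ).** On an E-Coxeter graph of type `𝒜_n` (a path with all
amplitude products equal to 1), every fundamental position is adjacency-free. -/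
theorem egcm_typeA_fundamental_adjacencyFree (n : ℕ) (E : EGCM (Fin n))
    (hadj : ∀ i j : Fin n, E.Adj i j ↔ (i.val + 1 = j.val ∨ j.val + 1 = i.val))
    (hprod : ∀ i j : Fin n, E.Adj i j → E.M i j * E.M j i = 1) :
    ∀ i : Fin n, E.AdjacencyFree (Pi.single i 1) := by
  intro i s _ ⟨a, b, hab, ha, hb⟩
  set d : Fin n → ℝ := fun j => E.pathScale j
  obtain ⟨x, hx_range, hx⟩ := E.exists_mul_fireList_eq_sub hadj
    (E.pathScale_mul_M hadj hprod) s (x := fun k => if k ≤ i.val then d i else 0)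
    (mul_single_one_eq_sub d i)
  have hx_two : Set.range x ⊆ {d i, 0} := hx_range.trans (by
    rintro _ ⟨k, rfl⟩
    dsimp only
    split_ifs <;> simp)
  have hd (j : Fin n) : 0 < d j := E.pathScale_pos hadj j
  rcases (hadj a b).1 hab with h | h
  · exact not_pos_and_pos_of_mul_eq_sub hd hx hx_two h ⟨ha, hb⟩
  · exact not_pos_and_pos_of_mul_eq_sub hd hx hx_two h ⟨hb, ha⟩
end

section
/- Let (Γ,M) be a four-node E-GCM graph whose underlying graph is a 4-cycle on nodes γ_1, γ_2, γ_3, γ_4 (in cyclic order), with M_{12}M_{21} = 4cos²(π/5) = (3+√5)/2 and M_{23}M_{32} = M_{34}M_{43} = M_{41}M_{14} = 1. Then (Γ,M) is not admissible. -/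
/-! Firing node `i` changes the pairing `c ⬝ᵥ lam` by `-lam i * (M c) i`, so if some positive
vector `c` satisfies `M c ≤ 0` this pairing never decreases along a legal firing sequence. It is
positive at a nonzero dominant position and nonpositive at a terminal one, so no such position has
a convergent game sequence. For the square with `M 0 1 * M 1 0 = 4 cos² (π / 5) = φ²` and the
products along the two edges adjacent to it equal to `1`, such a `c` can be written down explicitly; it only
uses `3 / 2 ≤ φ < 2`. -/

open Real goldenRatio Matrix

namespace EGCM

variable {ι : Type*} [Fintype ι] (E : EGCM ι)

theorem M_neg_of_adj {i j : ι} (h : E.Adj i j) : E.M i j < 0 :=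
  (E.offDiag_nonpos i j h.1).lt_of_ne h.2

theorem M_eq_zero_of_not_adj {i j : ι} (hij : i ≠ j) (h : ¬ E.Adj i j) : E.M i j = 0 :=
  not_not.mp fun hM => h ⟨hij, hM⟩

theorem dotProduct_fire (c lam : ι → ℝ) (i : ι) :
    c ⬝ᵥ E.fire lam i = c ⬝ᵥ lam - lam i * (of E.M *ᵥ c) i := by
  simp only [dotProduct, mulVec, fire, of_apply, mul_sub, Finset.sum_sub_distrib,
    Finset.mul_sum]
  congr 1
  exact Finset.sum_congr rfl fun j _ => by ring

theorem dotProduct_le_fireList {c : ι → ℝ} (hc : ∀ i, (of E.M *ᵥ c) i ≤ 0) :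
    ∀ {lam : ι → ℝ} {s : List ι}, E.Legal lam s → c ⬝ᵥ lam ≤ c ⬝ᵥ E.fireList lam s
  | _, [], _ => le_rfl
  | lam, i :: _, ⟨hi, hs⟩ =>
    calc c ⬝ᵥ lam ≤ c ⬝ᵥ E.fire lam i := by
          rw [dotProduct_fire]; linarith [mul_nonpos_of_nonneg_of_nonpos hi.le (hc i)]
      _ ≤ _ := dotProduct_le_fireList hc hs

theorem not_admissible_of_pos_of_mulVec_nonpos {c : ι → ℝ} (hpos : ∀ i, 0 < c i)
    (hc : ∀ i, (of E.M *ᵥ c) i ≤ 0) : ¬ E.Admissible := by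
  rintro ⟨lam, hdom, hne, s, hlegal, hterm⟩
  obtain ⟨k, hk⟩ := Function.ne_iff.mp hne
  have hstart : 0 < c ⬝ᵥ lam :=
    Finset.sum_pos' (fun i _ => mul_nonneg (hpos i).le (hdom i))
      ⟨k, Finset.mem_univ k, mul_pos (hpos k) ((hdom k).lt_of_ne' hk)⟩
  have hend : c ⬝ᵥ E.fireList lam s ≤ 0 :=
    Finset.sum_nonpos fun i _ => mul_nonpos_of_nonneg_of_nonpos (hpos i).le (hterm i)
  linarith [E.dotProduct_le_fireList hc hlegal]

end EGCM

theorem four_mul_cos_pi_div_five_sq : 4 * cos (π / 5) ^ 2 = φ ^ 2 := by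
  rw [cos_pi_div_five, goldenRatio]; ring

theorem three_halves_le_goldenRatio : 3 / 2 ≤ φ := by
  have : 2 < √5 := (lt_sqrt zero_le_two).2 (by norm_num)
  rw [goldenRatio]; linarith

/-- The weights are chosen so that rows `0` and `1` of `M c` vanish identically. -/
theorem exists_pos_of_mulVec_nonpos_of_square {M : Fin 4 → Fin 4 → ℝ} {p : ℝ}
    (hp : 3 / 2 ≤ p) (hp2 : p < 2) (hdiag : ∀ i, M i i = 2)
    (h02 : M 0 2 = 0) (h13 : M 1 3 = 0) (h20 : M 2 0 = 0) (h31 : M 3 1 = 0)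
    (n01 : M 0 1 < 0) (n12 : M 1 2 < 0) (n23 : M 2 3 < 0) (n30 : M 3 0 < 0)
    (n32 : M 3 2 < 0)
    (h01 : M 0 1 * M 1 0 = p ^ 2) (h12 : M 1 2 * M 2 1 = 1) (h30 : M 3 0 * M 0 3 = 1) :
    ∃ c : Fin 4 → ℝ, (∀ i, 0 < c i) ∧ ∀ i, (of M *ᵥ c) i ≤ 0 := by
  have hR : M 3 0 * M 0 1 * M 1 2 < 0 := mul_neg_of_pos_of_neg (mul_pos_of_neg_of_neg n30 n01) n12
  have hRM : 0 < M 3 0 * M 0 1 * M 1 2 * M 2 3 := mul_pos_of_neg_of_neg hR n23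
  have hp0 : 0 < p * (2 - p) := mul_pos (by linarith) (by linarith)
  refine ⟨![M 0 1 * M 1 2, -(p * M 1 2), p * (2 - p), -((2 - p) * (M 3 0 * M 0 1 * M 1 2))],
    ?_, ?_⟩
  · intro i
    fin_cases i
    exacts [mul_pos_of_neg_of_neg n01 n12,
      neg_pos.2 (mul_neg_of_pos_of_neg (by linarith) n12), hp0,
      neg_pos.2 (mul_neg_of_pos_of_neg (by linarith) hR)]
  · intro i
    fin_cases i <;>
      simp only [mulVec, dotProduct, of_apply, Fin.sum_univ_four, hdiag, h02, h13, h20, h31,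
        Fin.isValue, Fin.zero_eta, Fin.mk_one, Fin.reduceFinMk, cons_val_zero, cons_val_one,
        cons_val]
    · linear_combination (-((2 - p) * (M 0 1 * M 1 2))) * h30
    · linear_combination M 1 2 * h01
    · nlinarith [mul_nonneg (by linarith : (0 : ℝ) ≤ 2 * p - 3) hp0.le,
        mul_pos (sub_pos.2 hp2) hRM]
    · nlinarith [mul_nonpos_of_nonneg_of_nonpos (by linarith : (0 : ℝ) ≤ 2 * p - 3) hR.le,
        mul_neg_of_pos_of_neg hp0 n32]

theorem egcm_square_with_pentagon_edge_not_admissible_general (E : EGCM (Fin 4))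
    (hadj : ∀ i j : Fin 4,
      E.Adj i j ↔ (j.val = (i.val + 1) % 4 ∨ i.val = (j.val + 1) % 4))
    (h12 : E.M 0 1 * E.M 1 0 = 4 * Real.cos (Real.pi / 5) ^ 2)
    (h23 : E.M 1 2 * E.M 2 1 = 1)
    (h41 : E.M 3 0 * E.M 0 3 = 1) :
    ¬ E.Admissible := by
  have hneg : ∀ i j : Fin 4, (j.val = (i.val + 1) % 4 ∨ i.val = (j.val + 1) % 4) →
      E.M i j < 0 := fun i j h => E.M_neg_of_adj ((hadj i j).2 h)
  have hzero : ∀ i j : Fin 4, i ≠ j → ¬(j.val = (i.val + 1) % 4 ∨ i.val = (j.val + 1) % 4) →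
      E.M i j = 0 := fun i j hij h => E.M_eq_zero_of_not_adj hij (h ∘ (hadj i j).1)
  rw [four_mul_cos_pi_div_five_sq] at h12
  obtain ⟨c, hpos, hc⟩ := exists_pos_of_mulVec_nonpos_of_square three_halves_le_goldenRatio
    goldenRatio_lt_two E.diag
    (hzero 0 2 (by decide) (by decide)) (hzero 1 3 (by decide) (by decide))
    (hzero 2 0 (by decide) (by decide)) (hzero 3 1 (by decide) (by decide))
    (hneg 0 1 (by decide)) (hneg 1 2 (by decide)) (hneg 2 3 (by decide))
    (hneg 3 0 (by decide)) (hneg 3 2 (by decide)) h12 h23 h41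
  exact E.not_admissible_of_pos_of_mulVec_nonpos hpos hc

/-- **Lemma 6.5.** A four-node E-GCM graph which is a 4-cycle with one amplitude product
`4 cos² (π/5) = (3 + √5)/2` and the other three equal to `1` is not admissible. -/
theorem egcm_square_with_pentagon_edge_not_admissible (E : EGCM (Fin 4))
    (hadj : ∀ i j : Fin 4,
      E.Adj i j ↔ (j.val = (i.val + 1) % 4 ∨ i.val = (j.val + 1) % 4))
    (h12 : E.M 0 1 * E.M 1 0 = 4 * Real.cos (Real.pi / 5) ^ 2)
    (h23 : E.M 1 2 * E.M 2 1 = 1)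
    (h34 : E.M 2 3 * E.M 3 2 = 1)
    (h41 : E.M 3 0 * E.M 0 3 = 1) :
    ¬ E.Admissible :=
  egcm_square_with_pentagon_edge_not_admissible_general E hadj h12 h23 h41
end

section
/- Let (Γ,M) be a three-node E-GCM graph whose underlying graph is a triangle (all three pairs of nodes adjacent) and in which every pair of adjacent nodes is odd-neighborly (each m_ij is an odd integer ≥ 3). Then (Γ,M) is not admissible. -/
/-
Weight the nodes by positive numbers `c` with `∑ⱼ M i j * c j ≤ 0` at every node. Firing
node `i` changes `∑ⱼ c j * λ j` by `-λ i * ∑ⱼ M i j * c j`, so along a legal game the weighted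
sum never decreases: it starts positive at a nonzero dominant position and cannot end at a
position with no positive entries. On an odd triangle `M i j * M j i = 4 cos² (π / k) ≥ 1` for
every edge, and the cube roots `c i = (M i j * M i k) ^ (1/3)` are such weights by AM-GM.
-/

namespace EGCM

variable {ι : Type*} [Fintype ι]

theorem sum_mul_fire (E : EGCM ι) (c lam : ι → ℝ) (i : ι) :
    ∑ j, c j * E.fire lam i j = ∑ j, c j * lam j - lam i * ∑ j, E.M i j * c j := by
  simp only [fire, mul_sub, Finset.sum_sub_distrib, Finset.mul_sum]
  congr 1
  exact Finset.sum_congr rfl fun j _ => by ring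

theorem sum_mul_le_sum_mul_fireList (E : EGCM ι) {c : ι → ℝ}
    (hc : ∀ i, ∑ j, E.M i j * c j ≤ 0) :
    ∀ {lam : ι → ℝ} {s : List ι}, E.Legal lam s →
      ∑ j, c j * lam j ≤ ∑ j, c j * E.fireList lam s j
  | _, [], _ => le_rfl
  | lam, i :: s, ⟨hi, hs⟩ => by
    have hstep : ∑ j, c j * lam j ≤ ∑ j, c j * E.fire lam i j := by
      rw [sum_mul_fire]
      nlinarith [hc i]
    exact hstep.trans (sum_mul_le_sum_mul_fireList E hc hs)

theorem not_admissible_of_pos_weight (E : EGCM ι) {c : ι → ℝ} (hpos : ∀ i, 0 < c i)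
    (hc : ∀ i, ∑ j, E.M i j * c j ≤ 0) : ¬ E.Admissible := by
  rintro ⟨lam, hdom, hne, s, hlegal, hterm⟩
  obtain ⟨i, hi⟩ : ∃ i, lam i ≠ 0 := Function.ne_iff.mp hne
  have hstart : 0 < ∑ j, c j * lam j :=
    Finset.sum_pos' (fun j _ => mul_nonneg (hpos j).le (hdom j))
      ⟨i, Finset.mem_univ i, mul_pos (hpos i) ((hdom i).lt_of_ne' hi)⟩
  have hend : ∑ j, c j * E.fireList lam s j ≤ 0 :=
    Finset.sum_nonpos fun j _ => mul_nonpos_of_nonneg_of_nonpos (hpos j).le (hterm j)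
  linarith [E.sum_mul_le_sum_mul_fireList hc hlegal]

end EGCM

theorem one_le_four_mul_cos_pi_div_sq {k : ℝ} (hk : 3 ≤ k) :
    1 ≤ 4 * Real.cos (Real.pi / k) ^ 2 := by
  have hle : Real.pi / k ≤ Real.pi / 3 := div_le_div_of_nonneg_left Real.pi_pos.le (by norm_num) hk
  have hcos : 1 / 2 ≤ Real.cos (Real.pi / k) := by
    rw [← Real.cos_pi_div_three]
    exact Real.cos_le_cos_of_nonneg_of_le_pi (by positivity) (by linarith [Real.pi_pos]) hle
  nlinarith

theorem two_mul_le_add_of_cube_eq {x y z a b : ℝ} (ha : 0 ≤ a) (hb : 0 ≤ b)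
    (hx : 0 < x) (hy : 0 < y) (hz : 0 < z) (hcube : x ^ 3 = a * b) (hxyz : 1 ≤ x * y * z) :
    2 * x ≤ a * y + b * z := by
  have hsq : x ^ 2 ≤ (a * y) * (b * z) := by
    have : x * x ^ 2 ≤ x * ((a * y) * (b * z)) := by
      calc x * x ^ 2 = x ^ 3 * 1 := by ring
        _ ≤ x ^ 3 * (x * y * z) := by gcongr
        _ = x * ((a * y) * (b * z)) := by rw [hcube]; ring
    exact le_of_mul_le_mul_left this hx
  nlinarith [sq_nonneg (a * y - b * z), mul_nonneg ha hy.le, mul_nonneg hb hz.le]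

namespace EGCM

theorem exists_pos_weight_of_one_le_mul (E : EGCM (Fin 3))
    (hprod : ∀ i j, i ≠ j → 1 ≤ E.M i j * E.M j i) :
    ∃ c : Fin 3 → ℝ, (∀ i, 0 < c i) ∧ ∀ i, ∑ j, E.M i j * c j ≤ 0 := by
  have hneg : ∀ i j, i ≠ j → E.M i j < 0 := fun i j hij =>
    (E.offDiag_nonpos i j hij).lt_of_ne fun h0 => by
      linarith [hprod i j hij, show E.M i j * E.M j i = 0 by rw [h0, zero_mul]]
  set a : Fin 3 → Fin 3 → ℝ := fun i j => -E.M i j with ha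
  have ha_pos : ∀ i j, i ≠ j → 0 < a i j := fun i j hij => neg_pos.mpr (hneg i j hij)
  set u : Fin 3 → ℝ := ![a 0 1 * a 0 2, a 1 0 * a 1 2, a 2 0 * a 2 1] with hu
  have hu_pos : ∀ i, 0 < u i := by
    intro i
    fin_cases i <;> exact mul_pos (ha_pos _ _ (by decide)) (ha_pos _ _ (by decide))
  set c : Fin 3 → ℝ := fun i => u i ^ ((3 : ℕ) : ℝ)⁻¹
  have hc_pos : ∀ i, 0 < c i := fun i => Real.rpow_pos_of_pos (hu_pos i) _
  have hc_cube : ∀ i, c i ^ 3 = u i := fun i => Real.rpow_inv_natCast_pow (hu_pos i).le (by norm_num)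
  have hprod_c : 1 ≤ c 0 * c 1 * c 2 := by
    rw [← one_le_pow_iff_of_nonneg (by positivity [hc_pos 0, hc_pos 1, hc_pos 2]) three_ne_zero]
    have h01 := hprod 0 1 (by decide)
    have h02 := hprod 0 2 (by decide)
    have h12 := hprod 1 2 (by decide)
    calc (1 : ℝ) ≤ (E.M 0 1 * E.M 1 0) * (E.M 0 2 * E.M 2 0) * (E.M 1 2 * E.M 2 1) := by
          nlinarith [mul_le_mul h01 h02 zero_le_one (by linarith)]
      _ = (c 0 * c 1 * c 2) ^ 3 := by
          rw [mul_pow, mul_pow, hc_cube, hc_cube, hc_cube]; simp [hu, ha]; ring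
  refine ⟨c, hc_pos, fun i => ?_⟩
  rw [Fin.sum_univ_three]
  fin_cases i <;> simp only [Fin.zero_eta, Fin.mk_one, Fin.reduceFinMk, E.diag]
  · nlinarith [two_mul_le_add_of_cube_eq (ha_pos 0 1 (by decide)).le (ha_pos 0 2 (by decide)).le
      (hc_pos 0) (hc_pos 1) (hc_pos 2) (hc_cube 0) hprod_c]
  · nlinarith [two_mul_le_add_of_cube_eq (ha_pos 1 0 (by decide)).le (ha_pos 1 2 (by decide)).le
      (hc_pos 1) (hc_pos 0) (hc_pos 2) (hc_cube 1) (by linarith [hprod_c] : 1 ≤ c 1 * c 0 * c 2)]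
  · nlinarith [two_mul_le_add_of_cube_eq (ha_pos 2 0 (by decide)).le (ha_pos 2 1 (by decide)).le
      (hc_pos 2) (hc_pos 0) (hc_pos 1) (hc_cube 2) (by linarith [hprod_c] : 1 ≤ c 2 * c 0 * c 1)]

end EGCM

/-- **Lemma 6.6.** A three-node E-GCM graph which is a triangle all of whose node pairs
are odd-neighborly is not admissible. -/
theorem egcm_odd_triangle_not_admissible (E : EGCM (Fin 3))
    (hodd : ∀ i j : Fin 3, i ≠ j →
      ∃ k : ℕ, Odd k ∧ 3 ≤ k ∧ E.M i j * E.M j i = 4 * Real.cos (Real.pi / k) ^ 2) :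
    ¬ E.Admissible := by
  have hprod : ∀ i j, i ≠ j → 1 ≤ E.M i j * E.M j i := by
    intro i j hij
    obtain ⟨k, -, hk, hM⟩ := hodd i j hij
    exact hM ▸ one_le_four_mul_cos_pi_div_sq (by exact_mod_cast hk)
  obtain ⟨c, hpos, hc⟩ := E.exists_pos_weight_of_one_le_mul hprod
  exact E.not_admissible_of_pos_weight hpos hc
end
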